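/- arXiv:1312.3121 — 5 statements merged into one kernel-verified Lean document; each statement's English description precedes it below -/
import Mathlib

section
/- If X ≪_i Y ≪_i Z for some i ∈ [n], where X, Y, Z are subsets of [n] of the same cardinality and X and Z are weakly separated, then X ≪_i Z. -/
open Finset

variable {n : ℕ}

/-- Position of `x` in the cyclic order on `Fin n` starting at `i`. -/
def cpos (i x : Fin n) : ℕ := ((x - i : Fin n) : ℕ)

/-- `X ≪_i Y`: every element of `X \\ Y` precedes every element of `Y \\ X`
in the cyclic order starting at `i`. -/
def Ll (i : Fin n) (X Y : Finset (Fin n)) : Prop :=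
  ∀ x ∈ X \ Y, ∀ y ∈ Y \ X, cpos i x < cpos i y

/-- `X` and `Y` are weakly separated. -/
def WSep (X Y : Finset (Fin n)) : Prop := ∃ i : Fin n, Ll i X Y

/-!
Suppose `x ∈ X \ Z` and `z ∈ Z \ X` but `z <_i x`. Comparing through `Y` shows that `x` and `z`
lie on the same side of `Y`, and the equal cardinalities then produce `x' ∈ X \ Z` before `z` and
`z' ∈ Z \ X` after `x`. The pattern `x' < z < x < z'` alternates between `X \ Z` and `Z \ X`, and
an alternating pattern survives every cyclic rotation, so `X` and `Z` are not weakly separated.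
-/

lemma cpos_lt (i x : Fin n) : cpos i x < n := (x - i).isLt

lemma cpos_injective (i : Fin n) : Function.Injective (cpos i) := by
  have : NeZero n := ⟨i.pos.ne'⟩
  exact fun _ _ h => sub_left_injective (Fin.val_injective h)

lemma cpos_eq_ite (i j x : Fin n) :
    cpos j x = if n ≤ cpos i x + cpos j i then cpos i x + cpos j i - n
      else cpos i x + cpos j i := by
  have : NeZero n := ⟨i.pos.ne'⟩
  rw [cpos, ← sub_add_sub_cancel x i j, Fin.val_add_eq_ite]
  rfl

lemma not_wsep_of_alternating {X Z : Finset (Fin n)} (i : Fin n) {x' z x z' : Fin n}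
    (hx' : x' ∈ X \ Z) (hz : z ∈ Z \ X) (hx : x ∈ X \ Z) (hz' : z' ∈ Z \ X)
    (hx'z : cpos i x' < cpos i z) (hzx : cpos i z < cpos i x) (hxz' : cpos i x < cpos i z') :
    ¬ WSep X Z := by
  rintro ⟨j, hj⟩
  have hxz := hj x hx z hz
  have hx'z' := hj x' hx' z' hz'
  rw [cpos_eq_ite i j x, cpos_eq_ite i j z] at hxz
  rw [cpos_eq_ite i j x', cpos_eq_ite i j z'] at hx'z'
  have := cpos_lt i z'
  split_ifs at hxz hx'z' <;> omega

lemma exists_mem_sdiff_of_card_eq {α : Type*} [DecidableEq α] {A B : Finset α}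
    (h : A.card = B.card) {b : α} (hb : b ∈ B \ A) : ∃ a, a ∈ A \ B := by
  rw [← Finset.Nonempty, ← Finset.card_pos, Finset.card_sdiff_comm h, Finset.card_pos]
  exact ⟨b, hb⟩

section Chain

variable {i : Fin n} {X Y Z : Finset (Fin n)} {x z : Fin n}

lemma mem_iff_mem_of_cpos_lt (h1 : Ll i X Y) (h2 : Ll i Y Z) (hx : x ∈ X \ Z) (hz : z ∈ Z \ X)
    (hzx : cpos i z < cpos i x) : x ∈ Y ↔ z ∈ Y := by
  rw [mem_sdiff] at hx hz
  by_cases hxY : x ∈ Y <;> by_cases hzY : z ∈ Y <;> simp only [hxY, hzY]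
  · have := h2 x (mem_sdiff.2 ⟨hxY, hx.2⟩) z (mem_sdiff.2 ⟨hz.1, hzY⟩)
    omega
  · have := h1 x (mem_sdiff.2 ⟨hx.1, hxY⟩) z (mem_sdiff.2 ⟨hzY, hz.2⟩)
    omega

lemma exists_mem_sdiff_cpos_lt (hXY : X.card = Y.card) (hYZ : Y.card = Z.card)
    (h1 : Ll i X Y) (h2 : Ll i Y Z) (hx : x ∈ X \ Z) (hz : z ∈ Z \ X)
    (hzx : cpos i z < cpos i x) : ∃ x' ∈ X \ Z, cpos i x' < cpos i z := by
  have hxz := mem_iff_mem_of_cpos_lt h1 h2 hx hz hzx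
  rw [mem_sdiff] at hx hz
  by_cases hzY : z ∈ Y
  · have hzYX : z ∈ Y \ X := mem_sdiff.2 ⟨hzY, hz.2⟩
    obtain ⟨x', hx'⟩ := exists_mem_sdiff_of_card_eq hXY hzYX
    have hx'z := h1 x' hx' z hzYX
    refine ⟨x', mem_sdiff.2 ⟨(mem_sdiff.1 hx').1, fun hx'Z => ?_⟩, hx'z⟩
    have := h2 x (mem_sdiff.2 ⟨hxz.2 hzY, hx.2⟩) x' (mem_sdiff.2 ⟨hx'Z, (mem_sdiff.1 hx').2⟩)
    omega
  · have hzZY : z ∈ Z \ Y := mem_sdiff.2 ⟨hz.1, hzY⟩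
    obtain ⟨y, hy⟩ := exists_mem_sdiff_of_card_eq hYZ hzZY
    have hyz := h2 y hy z hzZY
    refine ⟨y, mem_sdiff.2 ⟨by_contra fun hyX => ?_, (mem_sdiff.1 hy).2⟩, hyz⟩
    have := h1 x (mem_sdiff.2 ⟨hx.1, mt hxz.1 hzY⟩) y (mem_sdiff.2 ⟨(mem_sdiff.1 hy).1, hyX⟩)
    omega

lemma exists_mem_sdiff_lt_cpos (hXY : X.card = Y.card) (hYZ : Y.card = Z.card)
    (h1 : Ll i X Y) (h2 : Ll i Y Z) (hx : x ∈ X \ Z) (hz : z ∈ Z \ X)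
    (hzx : cpos i z < cpos i x) : ∃ z' ∈ Z \ X, cpos i x < cpos i z' := by
  have hxz := mem_iff_mem_of_cpos_lt h1 h2 hx hz hzx
  rw [mem_sdiff] at hx hz
  by_cases hxY : x ∈ Y
  · have hxYZ : x ∈ Y \ Z := mem_sdiff.2 ⟨hxY, hx.2⟩
    obtain ⟨z', hz'⟩ := exists_mem_sdiff_of_card_eq hYZ.symm hxYZ
    have hxz' := h2 x hxYZ z' hz'
    refine ⟨z', mem_sdiff.2 ⟨(mem_sdiff.1 hz').1, fun hz'X => ?_⟩, hxz'⟩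
    have := h1 z' (mem_sdiff.2 ⟨hz'X, (mem_sdiff.1 hz').2⟩) z (mem_sdiff.2 ⟨hxz.1 hxY, hz.2⟩)
    omega
  · have hxXY : x ∈ X \ Y := mem_sdiff.2 ⟨hx.1, hxY⟩
    obtain ⟨y, hy⟩ := exists_mem_sdiff_of_card_eq hXY.symm hxXY
    have hxy := h1 x hxXY y hy
    refine ⟨y, mem_sdiff.2 ⟨by_contra fun hyZ => ?_, (mem_sdiff.1 hy).2⟩, hxy⟩
    have := h2 y (mem_sdiff.2 ⟨(mem_sdiff.1 hy).1, hyZ⟩) z (mem_sdiff.2 ⟨hz.1, mt hxz.2 hxY⟩)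
    omega

end Chain

/-- Lemma 1: if `X ≪_i Y ≪_i Z`, the three sets have the same cardinality, and
`X`, `Z` are weakly separated, then `X ≪_i Z`. -/
theorem ll_trans_of_wsep (i : Fin n) (X Y Z : Finset (Fin n))
    (hXY : X.card = Y.card) (hYZ : Y.card = Z.card)
    (h1 : Ll i X Y) (h2 : Ll i Y Z) (hsep : WSep X Z) :
    Ll i X Z := by
  intro x hx z hz
  by_contra hxz
  have hne : x ≠ z := fun h => (mem_sdiff.1 hx).2 (h ▸ (mem_sdiff.1 hz).1)
  have hzx : cpos i z < cpos i x :=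
    lt_of_le_of_ne (not_lt.1 hxz) fun h => hne (cpos_injective i h).symm
  obtain ⟨x', hx', hx'z⟩ := exists_mem_sdiff_cpos_lt hXY hYZ h1 h2 hx hz hzx
  obtain ⟨z', hz', hxz'⟩ := exists_mem_sdiff_lt_cpos hXY hYZ h1 h2 hx hz hzx
  exact not_wsep_of_alternating i hx' hz hx hz' hx'z hzx hxz' hsep
end

section
/- For subsets X, Y of [n] of the same cardinality, X ≪_i Y holds for some i ∈ [n] if and only if Y ≪_j X holds for some j ∈ [n]; consequently, the weak separation relation on r-element subsets of [n] is symmetric. -/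
/-!
If `X ≪_i Y`, restart the cyclic order at the `<_i`-first element `y₀` of `Y \ X`. Every element
of `Y \ X` comes at or after `y₀` in `<_i`, every element of `X \ Y` strictly before it, so in `<_{y₀}`
the elements of `Y \ X` keep their positions shifted down, while those of `X \ Y` wrap around to
the end. Hence `Y ≪_{y₀} X`.
-/

open Finset

variable {n : ℕ}

lemma cpos_eq_val_sub_sub (i j z : Fin n) : cpos j z = (((z - i) - (j - i) : Fin n) : ℕ) := by
  have : NeZero n := NeZero.of_pos z.pos
  rw [cpos, sub_sub_sub_cancel_right]

lemma cpos_eq_sub_of_le {i j z : Fin n} (h : cpos i j ≤ cpos i z) :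
    cpos j z = cpos i z - cpos i j := by
  rw [cpos_eq_val_sub_sub i, Fin.coe_sub_iff_le.mpr (Fin.le_def.mpr h)]
  rfl

lemma cpos_eq_add_sub_of_lt {i j z : Fin n} (h : cpos i z < cpos i j) :
    cpos j z = n + cpos i z - cpos i j := by
  rw [cpos_eq_val_sub_sub i, Fin.coe_sub_iff_lt.mpr (Fin.lt_def.mpr h)]
  rfl

lemma Ll.exists_ll_swap {i : Fin n} {X Y : Finset (Fin n)} (hi : Ll i X Y) :
    ∃ j : Fin n, Ll j Y X := by
  rcases (Y \ X).eq_empty_or_nonempty with hempty | hne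
  · exact ⟨i, fun y hy => by simp [hempty] at hy⟩
  obtain ⟨y₀, hy₀, hmin⟩ := exists_min_image (Y \ X) (cpos i) hne
  refine ⟨y₀, fun y hy x hx => ?_⟩
  have hxy₀ : cpos i x < cpos i y₀ := hi x hx y₀ hy₀
  have hy₀y : cpos i y₀ ≤ cpos i y := hmin y hy
  rw [cpos_eq_sub_of_le hy₀y, cpos_eq_add_sub_of_lt hxy₀]
  have := cpos_lt i y
  omega

theorem wsep_symm_iff_general (X Y : Finset (Fin n)) :
    (∃ i : Fin n, Ll i X Y) ↔ (∃ j : Fin n, Ll j Y X) :=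
  ⟨fun ⟨_, hi⟩ => hi.exists_ll_swap, fun ⟨_, hj⟩ => hj.exists_ll_swap⟩

/-- `X ≪_i Y` for some `i` iff `Y ≪_j X` for some `j`; hence weak separation
is a symmetric relation. -/
theorem wsep_symm_iff (X Y : Finset (Fin n)) (h : X.card = Y.card) :
    (∃ i : Fin n, Ll i X Y) ↔ (∃ j : Fin n, Ll j Y X) :=
  wsep_symm_iff_general X Y
end

section
/- The map π : [n] → [n] associated to a Grassmann necklace, sending i to the element π(i) with N_{i+1} = (N_i \ {i}) ∪ {π(i)}, is a bijection, under the assumption that i ∈ N_i for every i. -/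
open Finset

variable {n : ℕ} [NeZero n]

/-- A Grassmann necklace in `C([n], r)`. -/
def IsNecklace (N : Fin n → Finset (Fin n)) (r : ℕ) : Prop :=
  (∀ i, (N i).card = r) ∧ ∀ i, (N i).erase i ⊆ N (i + 1)

/-!
Since `[n]` is finite it suffices to show that `π` is surjective. Fix `x`. If `x` lies in every
`N_k`, then `x ∈ N_{x+1}` although `x` was removed from `N_x`, so `π(x) = x`. Otherwise walk
cyclically from some `k` with `x ∉ N_k` to `x ∈ N_x`: at the step `i` where `x` enters,
`x ∈ N_{i+1} \ N_i`, which forces `x = π(i)`.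
-/

open Fin.NatCast in
theorem Fin.exists_not_and_add_one {P : Fin n → Prop} {a b : Fin n} (ha : ¬P a) (hb : P b) :
    ∃ i, ¬P i ∧ P (i + 1) := by
  by_contra! hstep
  have hreach : ∀ m : ℕ, ¬P (a + m) := by
    intro m
    induction m with
    | zero => simpa using ha
    | succ m ih => simpa [Nat.cast_succ, ← add_assoc] using hstep _ ih
  have hab : a + ((b - a : Fin n) : ℕ) = b := by
    rw [Fin.cast_val_eq_self, add_sub_cancel]
  exact hreach _ (hab ▸ hb)

section Necklace

variable {N : Fin n → Finset (Fin n)} {p : Fin n → Fin n}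

theorem eq_of_mem_of_notMem_erase (hp : ∀ i, N (i + 1) = insert (p i) ((N i).erase i))
    {i x : Fin n} (hx : x ∈ N (i + 1)) (hx' : x ∉ (N i).erase i) : p i = x := by
  rw [hp, mem_insert] at hx
  exact (hx.resolve_right hx').symm

theorem surjective_of_insert_erase (hii : ∀ i, i ∈ N i)
    (hp : ∀ i, N (i + 1) = insert (p i) ((N i).erase i)) : Function.Surjective p := by
  intro x
  by_cases hall : ∀ k, x ∈ N k
  · exact ⟨x, eq_of_mem_of_notMem_erase hp (hall (x + 1)) (notMem_erase x _)⟩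
  · obtain ⟨k, hk⟩ := not_forall.mp hall
    obtain ⟨i, hi, hi1⟩ := Fin.exists_not_and_add_one (P := fun i => x ∈ N i) hk (hii x)
    exact ⟨i, eq_of_mem_of_notMem_erase hp hi1 fun h => hi (mem_of_mem_erase h)⟩

end Necklace

theorem necklace_perm_bijective_general (N : Fin n → Finset (Fin n))
    (hii : ∀ i, i ∈ N i)
    (p : Fin n → Fin n)
    (hp : ∀ i, N (i + 1) = insert (p i) ((N i).erase i)) :
    Function.Bijective p :=
  Finite.surjective_iff_bijective.mp (surjective_of_insert_erase hii hp)

/-- The map `π` associated with a Grassmann necklace, sending `i` to the element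
with `N_{i+1} = (N_i \\ {i}) ∪ {π(i)}`, is a bijection. -/
theorem necklace_perm_bijective (N : Fin n → Finset (Fin n)) (r : ℕ)
    (hN : IsNecklace N r) (hii : ∀ i, i ∈ N i)
    (p : Fin n → Fin n)
    (hp : ∀ i, N (i + 1) = insert (p i) ((N i).erase i)) :
    Function.Bijective p :=
  necklace_perm_bijective_general N hii p hp
end

section
/- For any permutation π of [n], the family N_π = (N_1, ..., N_n) defined by N_i = { j ∈ [n] : j ≤_i π^{-1}(j) } is a Grassmann necklace, i.e., all sets N_i have the same cardinality and N_i \ {i} ⊆ N_{i+1} for all i (indices mod n). -/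
/-!
Moving the base point of the cyclic order from `i` to `i + 1` sends `i` from the first to the
last position and lowers every other position by one. So a `k ∉ {i, π i}` lies in `N_{i+1}`
exactly when it lies in `N_i`, while `π i` (whose preimage `i` jumps to the end) always enters
and `i` always leaves: `N_{i+1} = insert (π i) (N_i \ {i})`. As `i ∈ N_i` and `π i ∈ N_i` only
when `π i = i`, this step preserves the cardinality.
-/

open Finset

variable {n : ℕ} [NeZero n]

/-- The Grassmann necklace associated with a permutation `π`:
`N_i = { k : k ≤_i π⁻¹(k) }`. -/
def necklaceOf (π : Equiv.Perm (Fin n)) (i : Fin n) : Finset (Fin n) :=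
  Finset.univ.filter fun k => cpos i k ≤ cpos i (π.symm k)

open Fin.CommRing in
theorem Fin.apply_eq_apply_zero_of_apply_add_one {α : Type*} {f : Fin n → α}
    (h : ∀ i, f (i + 1) = f i) (i : Fin n) : f i = f 0 := by
  rw [← Fin.cast_val_eq_self i]
  induction (i : ℕ) with
  | zero => simp
  | succ k ih => rw [Nat.cast_add_one, h, ih]

lemma cpos_eq_zero_iff {i x : Fin n} : cpos i x = 0 ↔ x = i := by
  rw [cpos, ← Fin.val_zero n, Fin.val_eq_val, sub_eq_zero]

lemma cpos_add_one (i x : Fin n) :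
    cpos (i + 1) x = if x = i then n - 1 else cpos i x - 1 := by
  obtain ⟨m, rfl⟩ := Nat.exists_eq_add_one_of_ne_zero (NeZero.ne n)
  rw [cpos, cpos, sub_add_eq_sub_sub, Fin.coe_sub_one]
  simp [sub_eq_zero]

lemma self_mem_necklaceOf (π : Equiv.Perm (Fin n)) (i : Fin n) : i ∈ necklaceOf π i := by
  simp [necklaceOf, cpos_eq_zero_iff.mpr rfl]

lemma apply_mem_necklaceOf_iff {π : Equiv.Perm (Fin n)} {i : Fin n} :
    π i ∈ necklaceOf π i ↔ π i = i := by
  simp [necklaceOf, cpos_eq_zero_iff.mpr rfl, cpos_eq_zero_iff]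

lemma necklaceOf_add_one (π : Equiv.Perm (Fin n)) (i : Fin n) :
    necklaceOf π (i + 1) = insert (π i) ((necklaceOf π i).erase i) := by
  ext k
  have hk : cpos i k < n := (k - i).isLt
  have hk' : cpos i (π.symm k) < n := (π.symm k - i).isLt
  have hk0 : cpos i k = 0 ↔ k = i := cpos_eq_zero_iff
  have hk0' : cpos i (π.symm k) = 0 ↔ k = π i := cpos_eq_zero_iff.trans π.symm_apply_eq
  simp only [necklaceOf, mem_insert, mem_erase, mem_filter, mem_univ, true_and, cpos_add_one,
    π.symm_apply_eq]
  split_ifs <;> omega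

lemma card_necklaceOf_add_one (π : Equiv.Perm (Fin n)) (i : Fin n) :
    #(necklaceOf π (i + 1)) = #(necklaceOf π i) := by
  have : π i ∉ (necklaceOf π i).erase i := by
    simp only [mem_erase, apply_mem_necklaceOf_iff]; tauto
  rw [necklaceOf_add_one, card_insert_of_notMem this,
    card_erase_add_one (self_mem_necklaceOf π i)]

/-- For any permutation `π`, the family `N_i = { k : k ≤_i π⁻¹(k) }`
is a Grassmann necklace: all its sets have a common cardinality `r` and
`N_i \\ {i} ⊆ N_{i+1}` for all `i`. -/
theorem necklaceOf_isNecklace (π : Equiv.Perm (Fin n)) :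
    ∃ r : ℕ, IsNecklace (necklaceOf π) r :=
  ⟨#(necklaceOf π 0),
    Fin.apply_eq_apply_zero_of_apply_add_one (card_necklaceOf_add_one π),
    fun i => necklaceOf_add_one π i ▸ subset_insert _ _⟩
end

section
/- Let π be a permutation of [n] with associated Grassmann necklace N(π) (with i ∈ N_i for all i). If Y ∈ Int(N(π)), i ∈ Y, and (i, j) is an alignment of π, then j ∈ Y. (Interior sets are π-chamber sets.) -/
open Finset

variable {n : ℕ}

/-- `(i, j)` is an alignment of `π`: the quadruple `π⁻¹(i), i, j, π⁻¹(j)`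
occurs in this cyclic order (`j = π(j)` allowed, `i = π(i)` not). -/
def IsAlignment (π : Equiv.Perm (Fin n)) (i j : Fin n) : Prop :=
  0 < cpos (π.symm i) i ∧
  cpos (π.symm i) i < cpos (π.symm i) j ∧
  cpos (π.symm i) j ≤ cpos (π.symm i) (π.symm j)

/-- The interior of a necklace `N`: `r`-sets `X` with `N_i ≪_i X` for all `i`. -/
def Interior (r : ℕ) (N : Fin n → Finset (Fin n)) : Set (Finset (Fin n)) :=
  {X | X.card = r ∧ ∀ i, Ll i (N i) X}

/-!
Read the cyclic order from `a = π⁻¹(i)`. The alignment condition `j ≤_a π⁻¹(j)` puts `j`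
into `N_a`, while `a <_a i` keeps `i` out of `N_a`. If `j ∉ Y`, then `N_a ≪_a Y` forces
`j <_a i`, contradicting `i <_a j`.
-/

@[simp]
theorem cpos_self (i : Fin n) : cpos i i = 0 := by
  have : NeZero n := ⟨i.pos.ne'⟩
  simp [cpos]

theorem mem_necklaceOf {π : Equiv.Perm (Fin n)} {i k : Fin n} :
    k ∈ necklaceOf π i ↔ cpos i k ≤ cpos i (π.symm k) := by
  simp [necklaceOf]

theorem notMem_necklaceOf_symm_self {π : Equiv.Perm (Fin n)} {k : Fin n}
    (h : 0 < cpos (π.symm k) k) : k ∉ necklaceOf π (π.symm k) := by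
  rw [mem_necklaceOf, cpos_self]
  omega

theorem Ll.cpos_lt {i x y : Fin n} {X Y : Finset (Fin n)} (h : Ll i X Y)
    (hxX : x ∈ X) (hxY : x ∉ Y) (hyY : y ∈ Y) (hyX : y ∉ X) : cpos i x < cpos i y :=
  h x (mem_sdiff.2 ⟨hxX, hxY⟩) y (mem_sdiff.2 ⟨hyY, hyX⟩)

/-- Sets of the interior of `N(π)` are `π`-chamber sets: if `Y ∈ Int(N(π))`,
`i ∈ Y` and `(i, j)` is an alignment of `π`, then `j ∈ Y`. -/
theorem interior_chamber (π : Equiv.Perm (Fin n)) (r : ℕ)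
    (Y : Finset (Fin n)) (hY : Y ∈ Interior r (necklaceOf π))
    (i j : Fin n) (ha : IsAlignment π i j) (hi : i ∈ Y) :
    j ∈ Y := by
  obtain ⟨hi_pos, hij, hj_le⟩ := ha
  by_contra hj
  have hji : cpos (π.symm i) j < cpos (π.symm i) i :=
    (hY.2 (π.symm i)).cpos_lt (mem_necklaceOf.2 hj_le) hj hi
      (notMem_necklaceOf_symm_self hi_pos)
  omega
end
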